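/- arXiv:1001.1087 — 8 statements merged into one kernel-verified Lean document; each statement's English description precedes it below -/
import Mathlib

section
/- The space of contact vector fields on the Engel group is infinite-dimensional as a real vector space. -/
namespace Engel

/-- Underlying vector space of the Engel Lie algebra, coordinates (x1, x2, y, z). -/
abbrev E : Type := Fin 4 → ℝ

/-- The Engel bracket: [X1,X2] = Y, [X1,Y] = Z, all other brackets of basis vectors zero. -/
noncomputable def engelBracket (v w : E) : E :=
  ![0, 0, v 0 * w 1 - v 1 * w 0, v 0 * w 2 - v 2 * w 0]

noncomputable def X1 : E := ![1, 0, 0, 0]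
noncomputable def X2 : E := ![0, 1, 0, 0]
noncomputable def Y : E := ![0, 0, 1, 0]
noncomputable def Z : E := ![0, 0, 0, 1]

/-- The grading derivation D0 : X1 ↦ X1, X2 ↦ X2, Y ↦ 2Y, Z ↦ 3Z. -/
noncomputable def D0 : E → E := fun v => ![v 0, v 1, 2 * v 2, 3 * v 3]

/-- Commutator bracket of vector fields on R^4. -/
noncomputable def vfBracket (V W : E → E) : E → E :=
  fun p => fderiv ℝ W p (V p) - fderiv ℝ V p (W p)

/-- The Engel left-invariant frame. -/
noncomputable def tX1 : E → E := fun _ => ![1, 0, 0, 0]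
noncomputable def tX2 : E → E := fun p => ![0, 1, p 0, p 0 ^ 2 / 2]
noncomputable def tY : E → E := fun p => ![0, 0, 1, p 0]
noncomputable def tZ : E → E := fun _ => ![0, 0, 0, 1]

/-- Derivative of a function along a vector field. -/
noncomputable def lder (W : E → E) (f : E → ℝ) : E → ℝ := fun p => fderiv ℝ f p (W p)

/-- A vector field is horizontal if it lies pointwise in span{X1~, X2~}. -/
def IsHorizontal (W : E → E) : Prop := ∀ p : E, ∃ a b : ℝ, W p = a • tX1 p + b • tX2 p

/-- A contact vector field: smooth, and its bracket with the horizontal frame is horizontal. -/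
def IsContact (V : E → E) : Prop :=
  ContDiff ℝ (⊤ : ℕ∞) V ∧ IsHorizontal (vfBracket V tX1) ∧ IsHorizontal (vfBracket V tX2)

end Engel


namespace EngelProof
open Engel

/-- generic shape: vector field depending on first coordinate only, with zero 0th component -/
lemma hasFDerivAt_shape (g2 g3 g4 : ℝ → ℝ) (d2 d3 d4 : ℝ) (p : E)
    (h2 : HasDerivAt g2 d2 (p 0)) (h3 : HasDerivAt g3 d3 (p 0))
    (h4 : HasDerivAt g4 d4 (p 0)) :
    HasFDerivAt (fun q : E => (![0, g2 (q 0), g3 (q 0), g4 (q 0)] : E))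
      ((ContinuousLinearMap.proj 0 : E →L[ℝ] ℝ).smulRight (![0, d2, d3, d4] : E)) p := by
  apply hasFDerivAt_pi''
  intro i
  have hproj : HasFDerivAt (fun q : E => q 0)
      (ContinuousLinearMap.proj 0 : E →L[ℝ] ℝ) p := hasFDerivAt_apply 0 p
  fin_cases i
  · have : HasFDerivAt (fun _ : E => (0:ℝ)) (0 : E →L[ℝ] ℝ) p := hasFDerivAt_const 0 p
    refine this.congr_fderiv ?_
    ext w; simp
  · have := h2.comp_hasFDerivAt p hproj
    refine this.congr_fderiv ?_
    ext w; simp [mul_comm]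
  · have := h3.comp_hasFDerivAt p hproj
    refine this.congr_fderiv ?_
    ext w; simp [mul_comm]
  · have := h4.comp_hasFDerivAt p hproj
    refine this.congr_fderiv ?_
    ext w; simp [mul_comm]

end EngelProof

namespace EngelProof
open Engel

/-- The contact field coming from f = x1 ^ (m+3):  f•Z~ - f'•Y~ + f''•X2~. -/
noncomputable def Vm (m : ℕ) : E → E := fun p =>
  ![0, ((m+3)*(m+2) : ℝ) * p 0 ^ (m+1),
      ((m+3)*(m+1) : ℝ) * p 0 ^ (m+2),
      ((m+2)*(m+1)/2 : ℝ) * p 0 ^ (m+3)]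

lemma hasDerivAt_cpow (c : ℝ) (k : ℕ) (x : ℝ) :
    HasDerivAt (fun t : ℝ => c * t ^ (k+1)) (c * (k+1) * x ^ k) x := by
  simpa [mul_assoc] using (hasDerivAt_pow (k+1) x).const_mul c

lemma hasDerivAt_cpow' (c d : ℝ) (k l : ℕ) (h : k = l + 1) (hd : d = c * k) (x : ℝ) :
    HasDerivAt (fun t : ℝ => c * t ^ k) (d * x ^ l) x := by
  subst h; subst hd
  convert hasDerivAt_cpow c l x using 1
  push_cast; ring

lemma hasFDerivAt_Vm (m : ℕ) (p : E) :
    HasFDerivAt (Vm m)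
      ((ContinuousLinearMap.proj 0 : E →L[ℝ] ℝ).smulRight
        (![0, ((m+3)*(m+2)*(m+1) : ℝ) * p 0 ^ m,
            ((m+3)*(m+1)*(m+2) : ℝ) * p 0 ^ (m+1),
            ((m+2)*(m+1)/2*(m+3) : ℝ) * p 0 ^ (m+2)] : E)) p := by
  apply hasFDerivAt_shape (fun t : ℝ => ((m+3)*(m+2) : ℝ) * t ^ (m+1))
    (fun t : ℝ => ((m+3)*(m+1) : ℝ) * t ^ (m+2)) (fun t : ℝ => ((m+2)*(m+1)/2 : ℝ) * t ^ (m+3))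
  · exact hasDerivAt_cpow' _ _ _ _ (by omega) (by push_cast; ring) (p 0)
  · exact hasDerivAt_cpow' _ _ _ _ (by omega) (by push_cast; ring) (p 0)
  · exact hasDerivAt_cpow' _ _ _ _ (by omega) (by push_cast; ring) (p 0)

lemma hasFDerivAt_tX2 (p : E) :
    HasFDerivAt tX2
      ((ContinuousLinearMap.proj 0 : E →L[ℝ] ℝ).smulRight (![0, 0, 1, p 0] : E)) p := by
  apply hasFDerivAt_shape (fun _ : ℝ => (1:ℝ)) (fun t : ℝ => t) (fun t : ℝ => t ^ 2 / 2)
  · exact hasDerivAt_const _ _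
  · exact hasDerivAt_id _
  · simpa using (hasDerivAt_pow 2 (p 0)).div_const 2

lemma contact_Vm (m : ℕ) : IsContact (Vm m) := by
  refine ⟨?_, ?_, ?_⟩
  · rw [contDiff_pi]
    intro i
    fin_cases i <;> simp only [Vm, Matrix.cons_val_zero, Matrix.cons_val_one, Matrix.head_cons,
      Matrix.cons_val_two, Matrix.tail_cons, Matrix.cons_val_three]
    · exact contDiff_const
    · exact contDiff_const.mul (((ContinuousLinearMap.proj (R := ℝ)
        (φ := fun _ : Fin 4 => ℝ) 0).contDiff).pow _)
    · exact contDiff_const.mul (((ContinuousLinearMap.proj (R := ℝ)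
        (φ := fun _ : Fin 4 => ℝ) 0).contDiff).pow _)
    · exact contDiff_const.mul (((ContinuousLinearMap.proj (R := ℝ)
        (φ := fun _ : Fin 4 => ℝ) 0).contDiff).pow _)
  · intro p
    refine ⟨0, -(((m+3)*(m+2)*(m+1) : ℝ) * p 0 ^ m), ?_⟩
    have h1 : fderiv ℝ tX1 p = 0 := by
      have : tX1 = fun _ : E => (![1,0,0,0] : E) := rfl
      rw [this]; exact fderiv_const_apply _
    rw [vfBracket, h1, (hasFDerivAt_Vm m p).fderiv]
    funext i
    fin_cases i <;>
      simp [tX1, tX2, Vm, ContinuousLinearMap.smulRight_apply] <;> ring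
  · intro p
    refine ⟨0, 0, ?_⟩
    rw [vfBracket, (hasFDerivAt_Vm m p).fderiv, (hasFDerivAt_tX2 p).fderiv]
    funext i
    fin_cases i <;> simp [tX1, tX2, Vm, ContinuousLinearMap.smulRight_apply]

end EngelProof

namespace EngelProof
open Engel

/-- evaluation along the x1-axis, 4th coordinate -/
noncomputable def Φ : (E → E) →ₗ[ℝ] (ℝ → ℝ) where
  toFun V := fun t => V (fun _ => t) 3
  map_add' := by intros; rfl
  map_smul' := by intros; rfl

lemma li_monomials (c : ℕ → ℝ) (hc : ∀ m, c m ≠ 0) :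
    LinearIndependent ℝ (fun m : ℕ => (fun t : ℝ => c m * t ^ (m + 3)) : ℕ → (ℝ → ℝ)) := by
  rw [linearIndependent_iff']
  intro s g h i hi
  set P : Polynomial ℝ := ∑ j ∈ s, Polynomial.C (g j * c j) * Polynomial.X ^ (j + 3) with hPdef
  have hP : P = 0 := by
    apply Polynomial.funext
    intro t
    have ht := congrFun h t
    simp only [Finset.sum_apply, Pi.smul_apply, smul_eq_mul, Pi.zero_apply] at ht
    simp only [hPdef, Polynomial.eval_finset_sum, Polynomial.eval_mul, Polynomial.eval_C,
      Polynomial.eval_pow, Polynomial.eval_X, Polynomial.eval_zero]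
    rw [← ht]
    exact Finset.sum_congr rfl fun j _ => by ring
  have hco := congrArg (fun q => Polynomial.coeff q (i + 3)) hP
  simp only [hPdef, Polynomial.finset_sum_coeff, Polynomial.coeff_C_mul,
    Polynomial.coeff_X_pow, Polynomial.coeff_zero, mul_ite, mul_one, mul_zero] at hco
  simp only [add_left_inj, Finset.sum_ite_eq, hi, if_true] at hco
  exact (mul_eq_zero.mp hco).resolve_right (hc i)

lemma li_Vm : LinearIndependent ℝ Vm := by
  apply LinearIndependent.of_comp Φ
  have : (⇑Φ ∘ Vm) = fun m : ℕ => (fun t : ℝ => (((m:ℝ)+2)*((m:ℝ)+1)/2) * t ^ (m + 3)) := by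
    funext m t
    simp [Φ, Vm]
  rw [this]
  apply li_monomials
  intro m
  positivity

end EngelProof


open Engel in
/-- The space of contact vector fields on the Engel group is infinite-dimensional. -/
theorem contact_fields_infinite_dimensional :
    ¬ FiniteDimensional ℝ (Submodule.span ℝ {V : E → E | IsContact V}) := by
  intro hfin
  have hmem : ∀ m : ℕ, EngelProof.Vm m ∈ Submodule.span ℝ {V : E → E | IsContact V} :=
    fun m => Submodule.subset_span (EngelProof.contact_Vm m)
  have li : LinearIndependent ℝ
      (fun m : ℕ => (⟨EngelProof.Vm m, hmem m⟩ :
        Submodule.span ℝ {V : E → E | IsContact V})) := by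
    apply LinearIndependent.of_comp (Submodule.span ℝ {V : E → E | IsContact V}).subtype
    exact EngelProof.li_Vm
  exact Module.Finite.not_linearIndependent_of_infinite _ li
end

section
/- Let V = f1 X1~ + f2 X2~ + g Y~ + h Z~ be a vector field on the Engel group with smooth coefficients. Then V is a contact vector field if and only if X1~ g = -f2, X1~ h = -g, X2~ g = f1, X2~ h = 0, and Y~ h = f1. -/
open Engel

noncomputable abbrev l0 : Engel.E →L[ℝ] ℝ := ContinuousLinearMap.proj 0

lemma hasFDerivAt_tY (p : E) : HasFDerivAt tY (l0.smulRight (tZ p)) p := by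
  have h : tY = fun q : E => ![0,0,1,0] + q 0 • (![0,0,0,1] : E) := by
    funext q i; fin_cases i <;> simp [tY]
  rw [h]
  exact (l0.hasFDerivAt.smul_const (![0,0,0,1] : E)).const_add _

lemma hasFDerivAt_tX2 (p : E) : HasFDerivAt tX2 (l0.smulRight (tY p)) p := by
  have h : tX2 = fun q : E =>
      ![0,1,0,0] + q 0 • (![0,0,1,0] : E) + (q 0 ^ 2 / 2) • (![0,0,0,1] : E) := by
    funext q i; fin_cases i <;> simp [tX2]
  rw [h]
  have h1 : HasFDerivAt (fun q : E => q 0 ^ 2 / 2) (p 0 • l0) p := by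
    have := ((l0.hasFDerivAt (x := p)).mul (l0.hasFDerivAt (x := p))).const_smul ((2:ℝ)⁻¹)
    convert this using 1 <;> try rfl
    · funext q; show q 0 ^ 2 / 2 = (2:ℝ)⁻¹ • (l0 q * l0 q); simp [l0, sq]; ring
    · ext v; simp [l0]; ring
  have := (((l0.hasFDerivAt (x := p)).smul_const (![0,0,1,0] : E)).const_add (![0,1,0,0] : E)).add
    (h1.smul_const (![0,0,0,1] : E))
  convert this using 1 <;> try rfl
  ext v i
  fin_cases i <;> simp [tY] <;> ring

section Main

variable (f1 f2 g h : E → ℝ)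

/-- The vector field of the theorem. -/
noncomputable def Vf : E → E := fun p => f1 p • tX1 p + f2 p • tX2 p + g p • tY p + h p • tZ p

variable {f1 f2 g h}

lemma hasFDerivAt_V (hf1 : ContDiff ℝ (⊤ : ℕ∞) f1) (hf2 : ContDiff ℝ (⊤ : ℕ∞) f2)
    (hg : ContDiff ℝ (⊤ : ℕ∞) g) (hh : ContDiff ℝ (⊤ : ℕ∞) h) (p : E) :
    HasFDerivAt (Vf f1 f2 g h)
      (((fderiv ℝ f1 p).smulRight (tX1 p)) +
        (f2 p • (l0.smulRight (tY p)) + (fderiv ℝ f2 p).smulRight (tX2 p)) +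
        (g p • (l0.smulRight (tZ p)) + (fderiv ℝ g p).smulRight (tY p)) +
        ((fderiv ℝ h p).smulRight (tZ p))) p := by
  have d1 := ((hf1.differentiable (by simp)) p).hasFDerivAt
  have d2 := ((hf2.differentiable (by simp)) p).hasFDerivAt
  have d3 := ((hg.differentiable (by simp)) p).hasFDerivAt
  have d4 := ((hh.differentiable (by simp)) p).hasFDerivAt
  have h1 : HasFDerivAt (fun p => f1 p • tX1 p) ((fderiv ℝ f1 p).smulRight (tX1 p)) p := by
    have := d1.smul_const (![1,0,0,0] : E)
    exact this
  have h2 : HasFDerivAt (fun p => f2 p • tX2 p)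
      (f2 p • (l0.smulRight (tY p)) + (fderiv ℝ f2 p).smulRight (tX2 p)) p :=
    d2.smul (hasFDerivAt_tX2 p)
  have h3 : HasFDerivAt (fun p => g p • tY p)
      (g p • (l0.smulRight (tZ p)) + (fderiv ℝ g p).smulRight (tY p)) p :=
    d3.smul (hasFDerivAt_tY p)
  have h4 : HasFDerivAt (fun p => h p • tZ p) ((fderiv ℝ h p).smulRight (tZ p)) p := by
    have := d4.smul_const (![0,0,0,1] : E)
    exact this
  exact ((h1.add h2).add h3).add h4

lemma fderiv_V_apply (hf1 : ContDiff ℝ (⊤ : ℕ∞) f1) (hf2 : ContDiff ℝ (⊤ : ℕ∞) f2)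
    (hg : ContDiff ℝ (⊤ : ℕ∞) g) (hh : ContDiff ℝ (⊤ : ℕ∞) h) (p v : E) :
    fderiv ℝ (Vf f1 f2 g h) p v =
      (fderiv ℝ f1 p v) • tX1 p + (fderiv ℝ f2 p v) • tX2 p +
      (f2 p * v 0 + fderiv ℝ g p v) • tY p + (g p * v 0 + fderiv ℝ h p v) • tZ p := by
  rw [(hasFDerivAt_V hf1 hf2 hg hh p).fderiv]
  simp [ContinuousLinearMap.smulRight_apply, add_smul, smul_smul]
  module

lemma bracket1_eq (hf1 : ContDiff ℝ (⊤ : ℕ∞) f1) (hf2 : ContDiff ℝ (⊤ : ℕ∞) f2)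
    (hg : ContDiff ℝ (⊤ : ℕ∞) g) (hh : ContDiff ℝ (⊤ : ℕ∞) h) (p : E) :
    vfBracket (Vf f1 f2 g h) tX1 p =
      (-(fderiv ℝ f1 p (tX1 p))) • tX1 p + (-(fderiv ℝ f2 p (tX1 p))) • tX2 p +
      (-(f2 p + fderiv ℝ g p (tX1 p))) • tY p + (-(g p + fderiv ℝ h p (tX1 p))) • tZ p := by
  have hc : fderiv ℝ tX1 p = 0 := fderiv_const_apply _
  rw [vfBracket, hc, fderiv_V_apply hf1 hf2 hg hh]
  have h0 : (tX1 p) 0 = 1 := rfl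
  rw [h0]
  simp
  module

lemma bracket2_eq (hf1 : ContDiff ℝ (⊤ : ℕ∞) f1) (hf2 : ContDiff ℝ (⊤ : ℕ∞) f2)
    (hg : ContDiff ℝ (⊤ : ℕ∞) g) (hh : ContDiff ℝ (⊤ : ℕ∞) h) (p : E) :
    vfBracket (Vf f1 f2 g h) tX2 p =
      (-(fderiv ℝ f1 p (tX2 p))) • tX1 p + (-(fderiv ℝ f2 p (tX2 p))) • tX2 p +
      (f1 p - fderiv ℝ g p (tX2 p)) • tY p + (-(fderiv ℝ h p (tX2 p))) • tZ p := by
  have hc : fderiv ℝ tX2 p = l0.smulRight (tY p) := (hasFDerivAt_tX2 p).fderiv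
  rw [vfBracket, hc, fderiv_V_apply hf1 hf2 hg hh]
  have h0 : (tX2 p) 0 = 0 := rfl
  have hV0 : l0 (Vf f1 f2 g h p) = f1 p := by
    simp [Vf, tX1, tX2, tY, tZ]
  rw [ContinuousLinearMap.smulRight_apply, hV0, h0]
  simp
  module

lemma mem_span_iff (p : E) (α β γ δ : ℝ) :
    (∃ a b : ℝ, α • tX1 p + β • tX2 p + γ • tY p + δ • tZ p = a • tX1 p + b • tX2 p) ↔
      γ = 0 ∧ δ = 0 := by
  constructor
  · rintro ⟨a, b, hab⟩
    have h1 := congrFun hab 1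
    have h2 := congrFun hab 2
    have h3 := congrFun hab 3
    simp [tX1, tX2, tY, tZ] at h1 h2 h3
    subst h1
    have hg : γ = 0 := by linarith
    subst hg
    constructor
    · rfl
    · linarith
  · rintro ⟨rfl, rfl⟩
    exact ⟨α, β, by simp⟩

end Main

open Engel in
/-- Contact characterization: V = f1 X1~ + f2 X2~ + g Y~ + h Z~ is contact iff
X1~g = -f2, X1~h = -g, X2~g = f1, X2~h = 0, Y~h = f1. -/
theorem contact_characterization (f1 f2 g h : E → ℝ)
    (hf1 : ContDiff ℝ (⊤ : ℕ∞) f1) (hf2 : ContDiff ℝ (⊤ : ℕ∞) f2)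
    (hg : ContDiff ℝ (⊤ : ℕ∞) g) (hh : ContDiff ℝ (⊤ : ℕ∞) h) :
    let V : E → E := fun p => f1 p • tX1 p + f2 p • tX2 p + g p • tY p + h p • tZ p
    ((∃ a b c d : E → ℝ,
        (∀ p, vfBracket V tX1 p = a p • tX1 p + b p • tX2 p) ∧
        (∀ p, vfBracket V tX2 p = c p • tX1 p + d p • tX2 p)) ↔
      (lder tX1 g = fun p => -f2 p) ∧
      (lder tX1 h = fun p => -g p) ∧
      (lder tX2 g = f1) ∧
      (lder tX2 h = 0) ∧
      (lder tY h = f1)) := by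
  intro V
  have hVf : V = Vf f1 f2 g h := rfl
  rw [hVf]
  constructor
  · rintro ⟨a, b, c, d, hab, hcd⟩
    have key1 : ∀ p : E, f2 p + fderiv ℝ g p (tX1 p) = 0 ∧ g p + fderiv ℝ h p (tX1 p) = 0 := by
      intro p
      have := (mem_span_iff p _ _ _ _).mp ⟨a p, b p, by rw [← bracket1_eq hf1 hf2 hg hh p]; exact hab p⟩
      constructor <;> [linarith [this.1]; linarith [this.2]]
    have key2 : ∀ p : E, fderiv ℝ g p (tX2 p) = f1 p ∧ fderiv ℝ h p (tX2 p) = 0 := by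
      intro p
      have := (mem_span_iff p _ _ _ _).mp ⟨c p, d p, by rw [← bracket2_eq hf1 hf2 hg hh p]; exact hcd p⟩
      constructor <;> [linarith [this.1]; linarith [this.2]]
    have e1 : lder tX1 g = fun p => -f2 p := by
      funext p; have := (key1 p).1; simp [lder]; linarith
    have e2 : lder tX1 h = fun p => -g p := by
      funext p; have := (key1 p).2; simp [lder]; linarith
    have e3 : lder tX2 g = f1 := by funext p; exact (key2 p).1
    have e4 : lder tX2 h = 0 := by funext p; exact (key2 p).2
    refine ⟨e1, e2, e3, e4, ?_⟩
    -- Schwarz argument: Y~h = X1~(X2~h) - X2~(X1~h) = X2~ g = f1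
    funext p
    have hdh : ∀ q : E, HasFDerivAt h (fderiv ℝ h q) q := fun q =>
      ((hh.differentiable (by simp)) q).hasFDerivAt
    have hdh' : Differentiable ℝ (fderiv ℝ h) :=
      (hh.fderiv_right (m := 1) ((WithTop.coe_le_coe.mpr le_top))).differentiable one_ne_zero
    have hf'' := (hdh' p).hasFDerivAt
    set f'' := fderiv ℝ (fderiv ℝ h) p with hf''def
    have hsymm := second_derivative_symmetric hdh hf'' 
    -- derivative of q ↦ fderiv h q (tX2 q) at p, along tX1 p
    have hA : HasFDerivAt (fun q => fderiv ℝ h q (tX2 q))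
        ((fderiv ℝ h p).comp (l0.smulRight (tY p)) + f''.flip (tX2 p)) p :=
      hf''.clm_apply (hasFDerivAt_tX2 p)
    have hA0 : (fun q => fderiv ℝ h q (tX2 q)) = fun _ => (0:ℝ) := by
      funext q
      exact (key2 q).2
    have hAz : ((fderiv ℝ h p).comp (l0.smulRight (tY p)) + f''.flip (tX2 p)) = 0 :=
      hA.unique (hA0 ▸ hasFDerivAt_const (0:ℝ) p)
    -- derivative of q ↦ fderiv h q (tX1 q) = -g at p
    have hB : HasFDerivAt (fun q => fderiv ℝ h q (tX1 q)) (f''.flip (tX1 p)) p := by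
      have := hf''.clm_apply (hasFDerivAt_const (![1,0,0,0] : E) p)
      simp at this; exact this
    have hBg : HasFDerivAt (fun q => fderiv ℝ h q (tX1 q)) (-(fderiv ℝ g p)) p := by
      have hg' : HasFDerivAt (fun q => -g q) (-(fderiv ℝ g p)) p :=
        ((hg.differentiable (by simp)) p).hasFDerivAt.neg
      have : (fun q => fderiv ℝ h q (tX1 q)) = fun q => -g q := by
        funext q; have := (key1 q).2; linarith
      rw [this]; exact hg'
    have hBeq : f''.flip (tX1 p) = -(fderiv ℝ g p) := hB.unique hBg
    -- combine
    have hz := congrFun (congrArg (fun (L : E →L[ℝ] ℝ) => L.toFun) hAz) (tX1 p)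
    -- hz : fderiv h p ((l0.smulRight (tY p)) (tX1 p)) + f'' (tX1 p) (tX2 p) = 0
    have hz' : fderiv ℝ h p (tY p) + f'' (tX1 p) (tX2 p) = 0 := by
      have h1 : (l0.smulRight (tY p)) (tX1 p) = tY p := by
        show (tX1 p 0) • tY p = tY p
        show (1:ℝ) • tY p = tY p
        simp
      simpa [h1, show tX1 p 0 = 1 from rfl] using hz
    have hz'' : f'' (tX1 p) (tX2 p) = -f1 p := by
      rw [hsymm (tX1 p) (tX2 p)]
      have := congrFun (congrArg (fun (L : E →L[ℝ] ℝ) => L.toFun) hBeq) (tX2 p)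
      simp at this
      rw [show f'' (tX2 p) (tX1 p) = (f''.flip (tX1 p)) (tX2 p) from rfl]
      rw [hBeq]
      simp
      exact (key2 p).1
    show fderiv ℝ h p (tY p) = f1 p
    linarith [hz', hz'']
  · rintro ⟨e1, e2, e3, e4, _⟩
    refine ⟨fun p => -(fderiv ℝ f1 p (tX1 p)), fun p => -(fderiv ℝ f2 p (tX1 p)),
      fun p => -(fderiv ℝ f1 p (tX2 p)), fun p => -(fderiv ℝ f2 p (tX2 p)), ?_, ?_⟩
    · intro p
      rw [bracket1_eq hf1 hf2 hg hh p]
      have h1 : f2 p + fderiv ℝ g p (tX1 p) = 0 := by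
        have := congrFun e1 p; simp [lder] at this; linarith
      have h2 : g p + fderiv ℝ h p (tX1 p) = 0 := by
        have := congrFun e2 p; simp [lder] at this; linarith
      rw [h1, h2]
      simp
    · intro p
      rw [bracket2_eq hf1 hf2 hg hh p]
      have h1 : f1 p - fderiv ℝ g p (tX2 p) = 0 := by
        have := congrFun e3 p; simp [lder] at this; linarith
      have h2 : fderiv ℝ h p (tX2 p) = 0 := by
        have := congrFun e4 p; simpa [lder] using this
      rw [h1, h2]
      simp
end

section
/- Every strata-preserving derivation D of the Engel Lie algebra satisfies D(X1) = d11 X1 + d21 X2, D(X2) = d22 X2 (i.e., the (1,2) matrix entry vanishes), D(Y) = (d11 + d22) Y, and D(Z) = (2 d11 + d22) Z, for some reals d11, d21, d22. -/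
open Engel in
/-- Every strata-preserving derivation D of the Engel Lie algebra has the form
D X1 = d11 X1 + d21 X2, D X2 = d22 X2, D Y = (d11+d22) Y, D Z = (2 d11+d22) Z. -/
theorem strata_preserving_derivation_form (D : E →ₗ[ℝ] E)
    (hder : ∀ v w : E, D (engelBracket v w) = engelBracket (D v) w + engelBracket v (D w))
    (h1 : ∀ v ∈ Submodule.span ℝ {X1, X2}, D v ∈ Submodule.span ℝ {X1, X2})
    (h2 : ∀ v ∈ Submodule.span ℝ {Y}, D v ∈ Submodule.span ℝ {Y})
    (h3 : ∀ v ∈ Submodule.span ℝ {Z}, D v ∈ Submodule.span ℝ {Z}) :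
    ∃ d11 d21 d22 : ℝ,
      D X1 = d11 • X1 + d21 • X2 ∧
      D X2 = d22 • X2 ∧
      D Y = (d11 + d22) • Y ∧
      D Z = (2 * d11 + d22) • Z := by

  obtain ⟨a, b, hX1⟩ := Submodule.mem_span_pair.mp
    (h1 X1 (Submodule.subset_span (by simp)))
  obtain ⟨c, d, hX2⟩ := Submodule.mem_span_pair.mp
    (h1 X2 (Submodule.subset_span (by simp)))
  obtain ⟨e, hY⟩ := Submodule.mem_span_singleton.mp
    (h2 Y (Submodule.mem_span_singleton_self Y))
  obtain ⟨f, hZ⟩ := Submodule.mem_span_singleton.mp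
    (h3 Z (Submodule.mem_span_singleton_self Z))
  have hXY : engelBracket X1 X2 = Y := by
    funext i; fin_cases i <;> simp [engelBracket, X1, X2, Y]
  have hX1Y : engelBracket X1 Y = Z := by
    funext i; fin_cases i <;> simp [engelBracket, X1, Y, Z]
  have hX2Y : engelBracket X2 Y = (0 : E) := by
    funext i; fin_cases i <;> simp [engelBracket, X2, Y]
  -- equation from [X2, Y] = 0 : c = 0
  have eq0 := hder X2 Y
  rw [hX2Y, ← hX2, ← hY, map_zero] at eq0
  have hc : c = 0 := by
    have := congrFun eq0 3
    simp [engelBracket, X1, X2, Y, Z, Pi.add_apply, Pi.smul_apply] at this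
    linarith
  -- equation from [X1, X2] = Y : e = a + d
  have eq1 := hder X1 X2
  rw [hXY, ← hX1, ← hX2, ← hY] at eq1
  have he : e = a + d := by
    have := congrFun eq1 2
    simp [engelBracket, X1, X2, Y, Z, Pi.add_apply, Pi.smul_apply] at this
    linarith
  -- equation from [X1, Y] = Z : f = a + e
  have eq2 := hder X1 Y
  rw [hX1Y, ← hX1, ← hY, ← hZ] at eq2
  have hf : f = a + e := by
    have := congrFun eq2 3
    simp [engelBracket, X1, X2, Y, Z, Pi.add_apply, Pi.smul_apply] at this
    linarith
  refine ⟨a, b, d, hX1.symm, ?_, ?_, ?_⟩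
  · rw [← hX2, hc]; funext i; fin_cases i <;> simp [X1, X2]
  · rw [← hY, he]
  · rw [← hZ, hf, he]; ring_nf
end

section
/- If D is a strata-preserving derivation of the Engel Lie algebra whose restriction to g_{-1} lies in co(2) (i.e., the 2×2 matrix of D on span{X1,X2} satisfies A + Aᵀ = kI for some scalar k), then D is a scalar multiple of the derivation D0 defined by D0(X1)=X1, D0(X2)=X2, D0(Y)=2Y, D0(Z)=3Z. Hence the space g_0 of such derivations is one-dimensional. -/
open Engel in
/-- A strata-preserving derivation whose restriction to g₋₁ lies in co(2) is a scalar
multiple of the grading derivation D0 = diag(1,1,2,3); hence g₀ is one-dimensional. -/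
theorem conformal_derivation_is_multiple_of_grading (D : E →ₗ[ℝ] E)
    (hder : ∀ v w : E, D (engelBracket v w) = engelBracket (D v) w + engelBracket v (D w))
    (h1 : ∀ v ∈ Submodule.span ℝ {X1, X2}, D v ∈ Submodule.span ℝ {X1, X2})
    (h2 : ∀ v ∈ Submodule.span ℝ {Y}, D v ∈ Submodule.span ℝ {Y})
    (h3 : ∀ v ∈ Submodule.span ℝ {Z}, D v ∈ Submodule.span ℝ {Z})
    -- the matrix of D on span{X1,X2} lies in co(2): A + Aᵀ = k I
    (hco : ∃ a b c d k : ℝ,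
      D X1 = a • X1 + c • X2 ∧ D X2 = b • X1 + d • X2 ∧
      a + a = k ∧ d + d = k ∧ b + c = 0) :
    ∃ t : ℝ, ∀ v : E, D v = t • D0 v := by
  obtain ⟨a, b, c, d, k, hX1, hX2, hak, hdk, hbc⟩ := hco
  have hda : d = a := by linarith
  have hcb : c = -b := by linarith
  subst hda hcb
  have e12 : engelBracket X1 X2 = Y := by
    funext i; fin_cases i <;> simp [engelBracket, X1, X2, Y]
  have e1Y : engelBracket X1 Y = Z := by
    funext i; fin_cases i <;> simp [engelBracket, X1, Y, Z]
  have e2Y : engelBracket X2 Y = (0 : E) := by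
    funext i; fin_cases i <;> simp [engelBracket, X2, Y]
  have hDY : D Y = (2 * d) • Y := by
    have h := hder X1 X2
    rw [e12, hX1, hX2] at h
    rw [h]; funext i; fin_cases i <;>
      simp [engelBracket, X1, X2, Y] <;> ring
  have hb : b = 0 := by
    have h := hder X2 Y
    rw [e2Y, hX2, hDY, map_zero] at h
    have h3 := congrFun h 3
    simpa [engelBracket, X1, X2, Y] using h3.symm
  subst hb
  have hDZ : D Z = (3 * d) • Z := by
    have h := hder X1 Y
    rw [e1Y, hX1, hDY] at h
    rw [h]; funext i; fin_cases i <;>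
      simp [engelBracket, X1, X2, Y, Z] <;> ring
  refine ⟨d, fun v => ?_⟩
  have hv : v = v 0 • X1 + v 1 • X2 + v 2 • Y + v 3 • Z := by
    funext i; fin_cases i <;> simp [X1, X2, Y, Z]
  rw [hv]
  simp only [map_add, map_smul, hX1, hX2, hDY, hDZ]
  funext i; fin_cases i <;> simp [D0, X1, X2, Y, Z] <;> ring
end

section
/- The first Tanaka prolongation space g_1 of the Engel Lie algebra through g_0 = R·D0 is zero. Explicitly: if u : g → g ⊕ g_0 is a linear map with u(g_j) ⊆ g_{j+1} for j = -1,-2,-3 (so u(g_{-1}) ⊆ g_0, u(g_{-2}) ⊆ g_{-1}, u(g_{-3}) ⊆ g_{-2}) satisfying u([S,T]) = [u(S),T] - [u(T),S] for all S, T in the strata, then u = 0. -/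
open Engel in
/-- The first Tanaka prolongation of the Engel algebra through g₀ = ℝ·D0 is zero.
An element of g ⊕ g₀ is represented as a pair (v, c) ∈ E × ℝ, standing for v + c·D0,
and the bracket of (v, c) with T ∈ g is engelBracket v T + c • D0 T. -/
theorem first_prolongation_is_zero (u : E →ₗ[ℝ] E × ℝ)
    -- grading: u(g₋₁) ⊆ g₀
    (hX1 : (u X1).1 = 0) (hX2 : (u X2).1 = 0)
    -- grading: u(g₋₂) ⊆ g₋₁
    (hY : (u Y).2 = 0 ∧ (u Y).1 2 = 0 ∧ (u Y).1 3 = 0)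
    -- grading: u(g₋₃) ⊆ g₋₂
    (hZ : (u Z).2 = 0 ∧ (u Z).1 0 = 0 ∧ (u Z).1 1 = 0 ∧ (u Z).1 3 = 0)
    -- Jacobi-type identity: u[S,T] = [u(S),T] - [u(T),S]
    (hjac : ∀ S T : E,
      (u (engelBracket S T)).1 =
        (engelBracket (u S).1 T + (u S).2 • D0 T) -
        (engelBracket (u T).1 S + (u T).2 • D0 S) ∧
      (u (engelBracket S T)).2 = 0) :
    u = 0 := by

  -- basic bracket values
  have eX1 : (![1, 0, 0, 0] : E) = X1 := rfl
  have eX2 : (![0, 1, 0, 0] : E) = X2 := rfl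
  have eY : (![0, 0, 1, 0] : E) = Y := rfl
  have eZ : (![0, 0, 0, 1] : E) = Z := rfl
  have eb12 : engelBracket X1 X2 = Y := by
    funext i; fin_cases i <;> simp [engelBracket, X1, X2, Y]
  have eb1Y : engelBracket X1 Y = Z := by
    funext i; fin_cases i <;> simp [engelBracket, X1, Y, Z]
  have eb2Y : engelBracket X2 Y = (0 : E) := by
    funext i; fin_cases i <;> simp [engelBracket, X2, Y]
  have eb1Z : engelBracket X1 Z = (0 : E) := by
    funext i; fin_cases i <;> simp [engelBracket, X1, Z]
  set a := (u X1).2 with ha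
  set b := (u X2).2 with hb
  -- u Y
  have hUY := (hjac X1 X2).1
  rw [eb12, hX1, hX2] at hUY
  have hUY0 : (u Y).1 0 = -b := by
    have h := congrFun hUY 0
    simp [engelBracket, X1, X2, D0] at h
    rw [eX2] at h; linarith
  have hUY1 : (u Y).1 1 = a := by
    have h := congrFun hUY 1
    simp [engelBracket, X1, X2, D0] at h
    rw [eX1] at h; linarith
  -- b = 0 from [X2, Y] = 0
  have hb0 : b = 0 := by
    have h := (hjac X2 Y).1
    rw [eb2Y, hX2, map_zero] at h
    have h2 := congrFun h 2
    simp [engelBracket, X2, Y, D0, hY.1] at h2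
    rw [eX2, eY] at h2
    rw [hUY0] at h2; linarith
  -- u Z at coordinate 2
  have hUZ := (hjac X1 Y).1
  rw [eb1Y, hX1] at hUZ
  have hUZ2 : (u Z).1 2 = 3 * a := by
    have h := congrFun hUZ 2
    simp [engelBracket, X1, Y, D0, hY.1] at h
    rw [eX1, eY] at h
    rw [hUY1] at h; linarith
  -- a = 0 from [X1, Z] = 0
  have ha0 : a = 0 := by
    have h := (hjac X1 Z).1
    rw [eb1Z, hX1, map_zero] at h
    have h3 := congrFun h 3
    simp [engelBracket, X1, Z, D0, hZ.1] at h3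
    rw [eX1, eZ] at h3
    rw [hUZ2] at h3; linarith
  -- values on basis vectors
  have huX1 : u X1 = 0 := by
    have h : u X1 = ((u X1).1, (u X1).2) := rfl
    rw [h, hX1, ← ha, ha0]; rfl
  have huX2 : u X2 = 0 := by
    have h : u X2 = ((u X2).1, (u X2).2) := rfl
    rw [h, hX2, ← hb, hb0]; rfl
  have huY : u Y = 0 := by
    have h1 : (u Y).1 = 0 := by
      funext i
      fin_cases i
      · simp [hUY0, hb0]
      · simp [hUY1, ha0]
      · exact hY.2.1
      · exact hY.2.2
    have h : u Y = ((u Y).1, (u Y).2) := rfl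
    rw [h, h1, hY.1]; rfl
  have huZ : u Z = 0 := by
    have h1 : (u Z).1 = 0 := by
      funext i
      fin_cases i
      · exact hZ.2.1
      · exact hZ.2.2.1
      · simp [hUZ2, ha0]
      · exact hZ.2.2.2
    have h : u Z = ((u Z).1, (u Z).2) := rfl
    rw [h, h1, hZ.1]; rfl
  -- conclude
  apply LinearMap.ext
  intro v
  have hv : v = v 0 • X1 + v 1 • X2 + v 2 • Y + v 3 • Z := by
    funext i; fin_cases i <;> simp [X1, X2, Y, Z]
  rw [hv]
  simp [map_add, map_smul, huX1, huX2, huY, huZ]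
end

section
/- If u lies in the first prolongation space g_1 of the Engel algebra and u(X1) = a D0, u(X2) = b D0, then the Jacobi-type identity forces u(Y) = a X2 - b X1 and u(Z) = 3a Y, and the relations 0 = u([X1,Z]) and 0 = u([X2,Z]) force a = 0 and b = 0. -/
open Engel in
/-- If u ∈ g₁ with u(X1) = a·D0 and u(X2) = b·D0, then the Jacobi-type identity forces
u(Y) = a X2 - b X1, u(Z) = 3a Y, and the relations with [X1,Z] = [X2,Z] = 0 force
a = 0 and b = 0. Elements of g ⊕ g₀ are pairs (v, c) representing v + c·D0. -/
theorem first_prolongation_computation (u : E →ₗ[ℝ] E × ℝ) (a b : ℝ)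
    (hX1 : u X1 = (0, a)) (hX2 : u X2 = (0, b))
    (hY : (u Y).2 = 0 ∧ (u Y).1 2 = 0 ∧ (u Y).1 3 = 0)
    (hZ : (u Z).2 = 0 ∧ (u Z).1 0 = 0 ∧ (u Z).1 1 = 0 ∧ (u Z).1 3 = 0)
    (hjac : ∀ S T : E,
      (u (engelBracket S T)).1 =
        (engelBracket (u S).1 T + (u S).2 • D0 T) -
        (engelBracket (u T).1 S + (u T).2 • D0 S) ∧
      (u (engelBracket S T)).2 = 0) :
    u Y = (a • X2 - b • X1, 0) ∧ u Z = ((3 * a) • Y, 0) ∧ a = 0 ∧ b = 0 := by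
  have eY : engelBracket X1 X2 = Y := by
    funext i; fin_cases i <;> simp [engelBracket, X1, X2, Y]
  have eZ : engelBracket X1 Y = Z := by
    funext i; fin_cases i <;> simp [engelBracket, X1, Y, Z]
  have eXZ : engelBracket X1 Z = 0 := by
    funext i; fin_cases i <;> simp [engelBracket, X1, Z]
  have eXZ2 : engelBracket X2 Z = 0 := by
    funext i; fin_cases i <;> simp [engelBracket, X2, Z]
  obtain ⟨h1, h2⟩ := hjac X1 X2
  rw [eY] at h1 h2
  rw [hX1, hX2] at h1
  have huY : u Y = (a • X2 - b • X1, 0) := by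
    refine Prod.ext ?_ h2
    rw [h1]; funext i
    fin_cases i <;>
      simp [engelBracket, X1, X2, D0, Pi.add_apply, Pi.sub_apply, Pi.smul_apply] <;> ring
  obtain ⟨h3, h4⟩ := hjac X1 Y
  rw [eZ] at h3 h4
  rw [hX1, huY] at h3
  have huZ : u Z = ((3 * a) • Y, 0) := by
    refine Prod.ext ?_ h4
    rw [h3]; funext i
    fin_cases i <;>
      simp [engelBracket, X1, X2, Y, D0, Pi.add_apply, Pi.sub_apply, Pi.smul_apply] <;> ring
  obtain ⟨h5, -⟩ := hjac X1 Z
  rw [eXZ, hX1, huZ, map_zero] at h5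
  have ha : a = 0 := by
    have := congrFun h5 3
    simp [engelBracket, X1, Y, Z, D0, Pi.add_apply, Pi.sub_apply, Pi.smul_apply] at this
    linarith
  obtain ⟨h6, -⟩ := hjac X2 Z
  rw [eXZ2, hX2, huZ, map_zero] at h6
  have hb : b = 0 := by
    have := congrFun h6 3
    simp [engelBracket, X2, Y, Z, D0, Pi.add_apply, Pi.sub_apply, Pi.smul_apply] at this
    linarith
  exact ⟨huY, huZ, ha, hb⟩
end

section
/- The five vector fields τ(D0) = (3z - 2x1 y + x1² x2 / 2) Z~ + (2y - x1 x2) Y~ + x1 X1~ + x2 X2~, τ(X1) = (y - x1 x2) Z~ + x2 Y~ + X1~, τ(X2) = (x1²/2) Z~ - x1 Y~ + X2~, τ(Y) = -x1 Z~ + Y~, τ(Z) = Z~ are all contact vector fields on the Engel group. -/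
namespace Engel

noncomputable def tauX1 : E → E := fun p => (p 2 - p 0 * p 1) • tZ p + p 1 • tY p + tX1 p
noncomputable def tauX2 : E → E := fun p => (p 0 ^ 2 / 2) • tZ p + (-p 0) • tY p + tX2 p
noncomputable def tauY : E → E := fun p => (-p 0) • tZ p + tY p
noncomputable def tauZ : E → E := fun p => tZ p
noncomputable def tauD0 : E → E := fun p =>
  (3 * p 3 - 2 * p 0 * p 2 + p 0 ^ 2 * p 1 / 2) • tZ p + (2 * p 2 - p 0 * p 1) • tY p +
    p 0 • tX1 p + p 1 • tX2 p

end Engel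

namespace Engel

/-! ### Auxiliary machinery -/

/-- Componentwise form of the tau fields. -/
lemma tauX1_eq : tauX1 = fun p => ![1, 0, p 1, p 2] := by
  funext p i
  fin_cases i <;> simp [tauX1, tZ, tY, tX1] <;> ring

lemma tauX2_eq : tauX2 = fun _ => (![0, 1, 0, 0] : E) := by
  funext p i
  fin_cases i <;> simp [tauX2, tZ, tY, tX2] <;> ring

lemma tauY_eq : tauY = fun _ => (![0, 0, 1, 0] : E) := by
  funext p i
  fin_cases i <;> simp [tauY, tZ, tY]

lemma tauZ_eq : tauZ = fun _ => (![0, 0, 0, 1] : E) := by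
  funext p i
  fin_cases i <;> simp [tauZ, tZ]

lemma tauD0_eq : tauD0 = fun p => ![p 0, p 1, 2 * p 2, 3 * p 3] := by
  funext p i
  fin_cases i <;> simp [tauD0, tZ, tY, tX1, tX2] <;> ring

noncomputable def pr (i : Fin 4) : E →L[ℝ] ℝ := ContinuousLinearMap.proj i

lemma hpr (i : Fin 4) (p : E) : HasFDerivAt (fun q : E => q i) (pr i) p :=
  hasFDerivAt_apply i p

noncomputable def LtX2 (p : E) : E →L[ℝ] E :=
  ContinuousLinearMap.pi ![0, 0, pr 0, p 0 • pr 0]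

noncomputable def LtauX1 : E →L[ℝ] E :=
  ContinuousLinearMap.pi ![0, 0, pr 1, pr 2]

noncomputable def LtauD0 : E →L[ℝ] E :=
  ContinuousLinearMap.pi ![pr 0, pr 1, (2 : ℝ) • pr 2, (3 : ℝ) • pr 3]

lemma hasF_tX2 (p : E) : HasFDerivAt tX2 (LtX2 p) p := by
  rw [hasFDerivAt_pi']
  intro i
  fin_cases i <;>
    simp only [tX2, LtX2, ContinuousLinearMap.proj_pi, Matrix.cons_val_zero,
      Matrix.cons_val_one, Matrix.head_cons, Matrix.cons_val_two, Matrix.tail_cons,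
      Matrix.cons_val_three, Matrix.cons_val_fin_one]
  · exact hasFDerivAt_const _ _
  · exact hasFDerivAt_const _ _
  · exact hpr 0 p
  · have h := ((hpr 0 p).mul (hpr 0 p)).const_mul (1/2 : ℝ)
    have e : (fun q : E => 1/2 * (q 0 * q 0)) = fun q : E => q 0 ^ 2 / 2 := by
      funext q; ring
    simp only [Pi.mul_apply] at h
    rw [e] at h
    exact h.congr_fderiv (by ext v; simp [pr]; ring)

lemma hasF_tauX1 (p : E) : HasFDerivAt tauX1 LtauX1 p := by
  rw [tauX1_eq, hasFDerivAt_pi']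
  intro i
  fin_cases i <;>
    simp only [LtauX1, ContinuousLinearMap.proj_pi, Matrix.cons_val_zero,
      Matrix.cons_val_one, Matrix.head_cons, Matrix.cons_val_two, Matrix.tail_cons,
      Matrix.cons_val_three, Matrix.cons_val_fin_one]
  · exact hasFDerivAt_const _ _
  · exact hasFDerivAt_const _ _
  · exact hpr 1 p
  · exact hpr 2 p

lemma hasF_tauD0 (p : E) : HasFDerivAt tauD0 LtauD0 p := by
  rw [tauD0_eq, hasFDerivAt_pi']
  intro i
  fin_cases i <;>
    simp only [LtauD0, ContinuousLinearMap.proj_pi, Matrix.cons_val_zero,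
      Matrix.cons_val_one, Matrix.head_cons, Matrix.cons_val_two, Matrix.tail_cons,
      Matrix.cons_val_three, Matrix.cons_val_fin_one]
  · exact hpr 0 p
  · exact hpr 1 p
  · exact (hpr 2 p).const_mul 2
  · exact (hpr 3 p).const_mul 3

lemma fderiv_tX1 (p : E) : fderiv ℝ tX1 p = 0 :=
  (hasFDerivAt_const (![1, 0, 0, 0] : E) p).fderiv

lemma fderiv_tX2 (p : E) : fderiv ℝ tX2 p = LtX2 p := (hasF_tX2 p).fderiv

lemma fderiv_tauX1 (p : E) : fderiv ℝ tauX1 p = LtauX1 := (hasF_tauX1 p).fderiv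

lemma fderiv_tauD0 (p : E) : fderiv ℝ tauD0 p = LtauD0 := (hasF_tauD0 p).fderiv

end Engel

open Engel in
/-- The five vector fields τ(D0), τ(X1), τ(X2), τ(Y), τ(Z) are contact vector fields. -/
theorem tau_fields_are_contact :
    IsContact tauD0 ∧ IsContact tauX1 ∧ IsContact tauX2 ∧
      IsContact tauY ∧ IsContact tauZ := by
  refine ⟨⟨?_, ?_, ?_⟩, ⟨?_, ?_, ?_⟩, ⟨?_, ?_, ?_⟩, ⟨?_, ?_, ?_⟩, ⟨?_, ?_, ?_⟩⟩
  -- tauD0 smooth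
  · rw [tauD0_eq]
    apply contDiff_pi.mpr
    intro i
    fin_cases i <;> simp <;> fun_prop
  -- [tauD0, tX1]
  · intro p
    refine ⟨-1, 0, ?_⟩
    simp only [vfBracket, fderiv_tX1, fderiv_tauD0]
    funext i
    fin_cases i <;>
      simp [LtauD0, tX1, tX2, pr, tauD0_eq]
  -- [tauD0, tX2]
  · intro p
    refine ⟨0, -1, ?_⟩
    simp only [vfBracket, fderiv_tX2, fderiv_tauD0]
    funext i
    fin_cases i <;>
      simp [LtauD0, LtX2, tX1, tX2, pr, tauD0_eq] <;> ring
  -- tauX1 smooth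
  · rw [tauX1_eq]
    apply contDiff_pi.mpr
    intro i
    fin_cases i <;> simp <;> fun_prop
  -- [tauX1, tX1]
  · intro p
    refine ⟨0, 0, ?_⟩
    simp only [vfBracket, fderiv_tX1, fderiv_tauX1]
    funext i
    fin_cases i <;>
      simp [LtauX1, tX1, tX2, pr, tauX1_eq]
  -- [tauX1, tX2]
  · intro p
    refine ⟨0, 0, ?_⟩
    simp only [vfBracket, fderiv_tX2, fderiv_tauX1]
    funext i
    fin_cases i <;>
      simp [LtauX1, LtX2, tX1, tX2, pr, tauX1_eq]
  -- tauX2 smooth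
  · rw [tauX2_eq]; exact contDiff_const
  -- [tauX2, tX1]
  · intro p
    refine ⟨0, 0, ?_⟩
    simp only [vfBracket, fderiv_tX1, tauX2_eq, fderiv_const]
    funext i
    fin_cases i <;> simp [tX1, tX2]
  -- [tauX2, tX2]
  · intro p
    refine ⟨0, 0, ?_⟩
    simp only [vfBracket, fderiv_tX2, tauX2_eq, fderiv_const]
    funext i
    fin_cases i <;> simp [LtX2, tX1, tX2, pr]
  -- tauY smooth
  · rw [tauY_eq]; exact contDiff_const
  -- [tauY, tX1]
  · intro p
    refine ⟨0, 0, ?_⟩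
    simp only [vfBracket, fderiv_tX1, tauY_eq, fderiv_const]
    funext i
    fin_cases i <;> simp [tX1, tX2]
  -- [tauY, tX2]
  · intro p
    refine ⟨0, 0, ?_⟩
    simp only [vfBracket, fderiv_tX2, tauY_eq, fderiv_const]
    funext i
    fin_cases i <;> simp [LtX2, tX1, tX2, pr]
  -- tauZ smooth
  · rw [tauZ_eq]; exact contDiff_const
  -- [tauZ, tX1]
  · intro p
    refine ⟨0, 0, ?_⟩
    simp only [vfBracket, fderiv_tX1, tauZ_eq, fderiv_const]
    funext i
    fin_cases i <;> simp [tX1, tX2]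
  -- [tauZ, tX2]
  · intro p
    refine ⟨0, 0, ?_⟩
    simp only [vfBracket, fderiv_tX2, tauZ_eq, fderiv_const]
    funext i
    fin_cases i <;> simp [LtX2, tX1, tX2, pr]
end

section
/- The map τ from the prolongation algebra s = span{X1, X2, Y, Z, D0} to vector fields on R^4, defined by τ(X1) = (y - x1 x2) Z~ + x2 Y~ + X1~, τ(X2) = (x1²/2) Z~ - x1 Y~ + X2~, τ(Y) = -x1 Z~ + Y~, τ(Z) = Z~, τ(D0) = (3z - 2x1 y + x1² x2/2) Z~ + (2y - x1 x2) Y~ + x1 X1~ + x2 X2~, is an injective Lie algebra (anti-)homomorphism; in particular its image is a 5-dimensional Lie algebra of vector fields. -/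
namespace Engel

/-- The bracket on the Tanaka prolongation s = g ⊕ ℝ·D0: a pair (v, a) represents
v + a·D0, and [v + a D0, w + b D0] = [v,w] + a D0(w) - b D0(v). -/
noncomputable def sBracket (S T : E × ℝ) : E × ℝ :=
  (engelBracket S.1 T.1 + S.2 • D0 T.1 - T.2 • D0 S.1, 0)

end Engel

namespace Engel

/-- Closed form of the map tau. -/
noncomputable def tF (S : E × ℝ) : E → E := fun p =>
  ![S.1 0 + S.2 * p 0, S.1 1 + S.2 * p 1,
    S.1 0 * p 1 + S.1 2 + 2 * S.2 * p 2, S.1 0 * p 2 + S.1 3 + 3 * S.2 * p 3]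

lemma tF_eq (S : E × ℝ) :
    (fun p => S.1 0 • tauX1 p + S.1 1 • tauX2 p + S.1 2 • tauY p + S.1 3 • tauZ p +
      S.2 • tauD0 p) = tF S := by
  funext p i
  fin_cases i <;>
    simp [tF, tauX1, tauX2, tauY, tauZ, tauD0, tX1, tX2, tY, tZ] <;> ring

/-- The linear part of tF S. -/
noncomputable def tL (S : E × ℝ) : E →L[ℝ] E :=
  LinearMap.toContinuousLinearMap (Matrix.mulVecLin
    !![S.2, 0, 0, 0; 0, S.2, 0, 0; 0, S.1 0, 2 * S.2, 0; 0, 0, S.1 0, 3 * S.2])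

lemma tL_apply (S : E × ℝ) (p : E) :
    tL S p = ![S.2 * p 0, S.2 * p 1, S.1 0 * p 1 + 2 * S.2 * p 2,
      S.1 0 * p 2 + 3 * S.2 * p 3] := by
  funext i
  fin_cases i <;>
    simp [tL, Matrix.mulVecLin, Matrix.mulVec, dotProduct, Fin.sum_univ_four]

lemma tF_hasFDerivAt (S : E × ℝ) (p : E) : HasFDerivAt (tF S) (tL S) p := by
  have h : tF S = fun q => tL S q + ![S.1 0, S.1 1, S.1 2, S.1 3] := by
    funext q i
    fin_cases i <;> simp [tF, tL_apply] <;> ring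
  rw [h]
  exact (tL S).hasFDerivAt.add_const _

lemma fderiv_tF (S : E × ℝ) (p : E) : fderiv ℝ (tF S) p = tL S :=
  (tF_hasFDerivAt S p).fderiv

lemma tF_injective : Function.Injective tF := by
  intro S T h
  have h0 := congrFun h (0 : E)
  have h1 := congrFun h (![1, 0, 0, 0] : E)
  have e0 := congrFun h0 0
  have e1 := congrFun h0 1
  have e2 := congrFun h0 2
  have e3 := congrFun h0 3
  have f0 := congrFun h1 0
  simp [tF] at e0 e1 e2 e3 f0
  refine Prod.ext ?_ ?_
  · funext i
    fin_cases i
    · exact e0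
    · exact e1
    · exact e2
    · exact e3
  · linarith

lemma tF_add (S T : E × ℝ) : tF (S + T) = tF S + tF T := by
  funext p i
  fin_cases i <;> simp [tF] <;> ring

lemma tF_smul (a : ℝ) (S : E × ℝ) : tF (a • S) = a • tF S := by
  funext p i
  fin_cases i <;> simp [tF] <;> ring

lemma tF_bracket (S T : E × ℝ) :
    vfBracket (tF S) (tF T) = (-1 : ℝ) • tF (sBracket S T) := by
  funext p i
  simp only [vfBracket, fderiv_tF, Pi.smul_apply]
  fin_cases i <;>
    simp [tL_apply, tF, sBracket, engelBracket, D0] <;> ring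

/-- tF as a linear map. -/
noncomputable def tFLin : (E × ℝ) →ₗ[ℝ] (E → E) where
  toFun := tF
  map_add' := tF_add
  map_smul' := tF_smul

lemma tF_span_finrank :
    Module.finrank ℝ (Submodule.span ℝ (Set.range tF)) = 5 := by
  have hr : Set.range tF = Set.range tFLin := rfl
  rw [hr, ← LinearMap.coe_range, Submodule.span_eq,
    LinearMap.finrank_range_of_inj tF_injective]
  simp [Module.finrank_prod]

end Engel

open Engel in
/-- τ : s → vector fields is an injective linear Lie algebra (anti-)homomorphism with
5-dimensional image. Elements of s = g ⊕ ℝ·D0 are pairs (v, a) representing v + a·D0. -/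
theorem tau_is_injective_lie_antihomomorphism :
    let tau : E × ℝ → (E → E) := fun S => fun p =>
      S.1 0 • tauX1 p + S.1 1 • tauX2 p + S.1 2 • tauY p + S.1 3 • tauZ p + S.2 • tauD0 p
    Function.Injective tau ∧
    (∀ S T : E × ℝ, tau (S + T) = tau S + tau T) ∧
    (∀ (a : ℝ) (S : E × ℝ), tau (a • S) = a • tau S) ∧
    (∃ ε : ℝ, (ε = 1 ∨ ε = -1) ∧
      ∀ S T : E × ℝ, vfBracket (tau S) (tau T) = ε • tau (sBracket S T)) ∧
    Module.finrank ℝ (Submodule.span ℝ (Set.range tau)) = 5 := by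
  intro tau
  have htau : tau = tF := funext tF_eq
  rw [htau]
  exact ⟨tF_injective, tF_add, tF_smul, ⟨-1, Or.inr rfl, tF_bracket⟩, tF_span_finrank⟩
end
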